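/- Let A = [[a, b], [c, d]] be an element of SL₂(ℤ) with b·c ≠ 0 and |a + d| ≤ k for some k > 0. Then A is conjugate in SL₂(ℤ) to a matrix [[a₁, b₁], [c₁, d₁]] with |a₁| ≤ k. -/

import Mathlib

abbrev SL2' := Matrix.SpecialLinearGroup (Fin 2) ℤ
abbrev M2' := Matrix (Fin 2) (Fin 2) ℤ

def Tmat (n : ℤ) : SL2' := ⟨!![1, n; 0, 1], by simp [Matrix.det_fin_two_of]⟩
def Lmat (n : ℤ) : SL2' := ⟨!![1, 0; n, 1], by simp [Matrix.det_fin_two_of]⟩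
def Smat : SL2' := ⟨!![0, -1; 1, 0], by simp [Matrix.det_fin_two_of]⟩

lemma Tmat_inv (n : ℤ) : (Tmat n)⁻¹ = Tmat (-n) := by
  apply inv_eq_of_mul_eq_one_right
  apply Subtype.ext
  rw [Matrix.SpecialLinearGroup.coe_mul]
  simp [Tmat, Matrix.SpecialLinearGroup.coe_mul, Matrix.mul_fin_two, Matrix.one_fin_two]

lemma Lmat_inv (n : ℤ) : (Lmat n)⁻¹ = Lmat (-n) := by
  apply inv_eq_of_mul_eq_one_right
  apply Subtype.ext
  rw [Matrix.SpecialLinearGroup.coe_mul]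
  simp [Lmat, Matrix.SpecialLinearGroup.coe_mul, Matrix.mul_fin_two, Matrix.one_fin_two]

lemma Smat_inv : Smat⁻¹ = ⟨!![0, 1; -1, 0], by simp [Matrix.det_fin_two_of]⟩ := by
  apply inv_eq_of_mul_eq_one_right
  apply Subtype.ext
  erw [Matrix.SpecialLinearGroup.coe_mul]
  simp [Smat, Matrix.SpecialLinearGroup.coe_mul, Matrix.mul_fin_two, Matrix.one_fin_two]

lemma conjT (A : SL2') (n : ℤ) : ∃ A' : SL2', IsConj A A' ∧
    (A' : M2') 0 0 = (A : M2') 0 0 + n * (A : M2') 1 0 ∧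
    (A' : M2') 1 1 = (A : M2') 1 1 - n * (A : M2') 1 0 := by
  refine ⟨Tmat n * A * (Tmat n)⁻¹, isConj_iff.mpr ⟨Tmat n, rfl⟩, ?_, ?_⟩
  all_goals {
    have h : ((Tmat n * A * (Tmat n)⁻¹ : SL2') : M2')
        = !![1, n; 0, 1] * (A : M2') * !![1, -n; 0, 1] := by
      rw [Tmat_inv, Matrix.SpecialLinearGroup.coe_mul, Matrix.SpecialLinearGroup.coe_mul]; simp [Tmat]
    rw [h, Matrix.eta_fin_two (A : M2')]
    simp [Matrix.mul_fin_two]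
    try ring }

lemma conjL (A : SL2') (n : ℤ) : ∃ A' : SL2', IsConj A A' ∧
    (A' : M2') 0 0 = (A : M2') 0 0 - n * (A : M2') 0 1 ∧
    (A' : M2') 1 1 = (A : M2') 1 1 + n * (A : M2') 0 1 := by
  refine ⟨Lmat n * A * (Lmat n)⁻¹, isConj_iff.mpr ⟨Lmat n, rfl⟩, ?_, ?_⟩
  all_goals {
    have h : ((Lmat n * A * (Lmat n)⁻¹ : SL2') : M2')
        = !![1, 0; n, 1] * (A : M2') * !![1, 0; -n, 1] := by
      rw [Lmat_inv, Matrix.SpecialLinearGroup.coe_mul, Matrix.SpecialLinearGroup.coe_mul]; simp [Lmat]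
    rw [h, Matrix.eta_fin_two (A : M2')]
    simp [Matrix.mul_fin_two]
    try ring }

lemma conjS (A : SL2') : ∃ A' : SL2', IsConj A A' ∧
    (A' : M2') 0 0 = (A : M2') 1 1 ∧
    (A' : M2') 1 1 = (A : M2') 0 0 := by
  refine ⟨Smat * A * Smat⁻¹, isConj_iff.mpr ⟨Smat, rfl⟩, ?_, ?_⟩
  all_goals {
    have h : ((Smat * A * Smat⁻¹ : SL2') : M2')
        = !![0, -1; 1, 0] * (A : M2') * !![0, 1; -1, 0] := by
      rw [Smat_inv]; erw [Matrix.SpecialLinearGroup.coe_mul, Matrix.SpecialLinearGroup.coe_mul]; simp [Smat]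
    rw [h, Matrix.eta_fin_two (A : M2')]
    simp [Matrix.mul_fin_two]
    try ring }

lemma shrink (x e : ℤ) (he : e ≠ 0) (h : |e| < 2 * |x|) :
    |x + e| < |x| ∨ |x - e| < |x| := by
  simp only [Int.abs_eq_natAbs] at *
  omega

lemma exists_e (a d b c : ℤ) (hdet : a * d - b * c = 1)
    (h1 : |a + d| < |a|) (h2 : |a + d| < |d|) (hord : |a| ≤ |d|) :
    (b ≠ 0 ∧ |b| < 2 * |a|) ∨ (c ≠ 0 ∧ |c| < 2 * |a|) := by
  have h3 : (0 < a ∧ d < 0) ∨ (a < 0 ∧ 0 < d) := by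
    simp only [Int.abs_eq_natAbs] at h1 h2
    omega
  have hsign : a * d < 0 := by
    rcases h3 with ⟨ha, hd⟩ | ⟨ha, hd⟩
    · exact mul_neg_of_pos_of_neg ha hd
    · exact mul_neg_of_neg_of_pos ha hd
  have hbc2 : |b| * |c| = |a| * |d| + 1 := by
    rw [← abs_mul, ← abs_mul]
    have hbc : b * c = a * d - 1 := by linarith
    rw [hbc, abs_of_neg (by linarith : a * d - 1 < 0), abs_of_neg hsign]
    ring
  have hd2 : |d| < 2 * |a| := by
    simp only [Int.abs_eq_natAbs] at *
    omega
  have hb0 : b ≠ 0 := by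
    intro h; rw [h] at hbc2; simp at hbc2
    nlinarith [abs_nonneg a, abs_nonneg d, abs_pos.mpr (show a ≠ 0 by rintro rfl; simp at hsign)]
  have hc0 : c ≠ 0 := by
    intro h; rw [h] at hbc2; simp at hbc2
    nlinarith [abs_nonneg a, abs_nonneg d, abs_pos.mpr (show a ≠ 0 by rintro rfl; simp at hsign)]
  by_contra H
  push_neg at H
  obtain ⟨Hb, Hc⟩ := H
  have hb2 := Hb hb0
  have hc2 := Hc hc0
  have ha1 : 1 ≤ |a| := by
    have := abs_nonneg (a + d); omega
  nlinarith [hbc2, hd2, hb2, hc2, ha1]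

/-- Shrink the top-left entry, keeping trace, by conjugating by a unipotent. -/
lemma shrink_a (A : SL2')
    (h : ((A : M2') 0 1 ≠ 0 ∧ |(A : M2') 0 1| < 2 * |(A : M2') 0 0|) ∨
         ((A : M2') 1 0 ≠ 0 ∧ |(A : M2') 1 0| < 2 * |(A : M2') 0 0|)) :
    ∃ A' : SL2', IsConj A A' ∧ |(A' : M2') 0 0| < |(A : M2') 0 0| ∧
      (A' : M2') 0 0 + (A' : M2') 1 1 = (A : M2') 0 0 + (A : M2') 1 1 := by
  rcases h with ⟨hne, hlt⟩ | ⟨hne, hlt⟩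
  · rcases shrink ((A : M2') 0 0) ((A : M2') 0 1) hne hlt with hs | hs
    · obtain ⟨A', hc, h00, h11⟩ := conjL A (-1)
      refine ⟨A', hc, ?_, ?_⟩
      · rw [h00]; simpa using hs
      · rw [h00, h11]; ring
    · obtain ⟨A', hc, h00, h11⟩ := conjL A 1
      refine ⟨A', hc, ?_, ?_⟩
      · rw [h00]; simpa using hs
      · rw [h00, h11]; ring
  · rcases shrink ((A : M2') 0 0) ((A : M2') 1 0) hne hlt with hs | hs
    · obtain ⟨A', hc, h00, h11⟩ := conjT A 1
      refine ⟨A', hc, ?_, ?_⟩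
      · rw [h00]; simpa using hs
      · rw [h00, h11]; ring
    · obtain ⟨A', hc, h00, h11⟩ := conjT A (-1)
      refine ⟨A', hc, ?_, ?_⟩
      · rw [h00]; simpa [sub_eq_add_neg] using hs
      · rw [h00, h11]; ring

/-- Shrink the bottom-right entry, keeping trace. -/
lemma shrink_d (A : SL2')
    (h : ((A : M2') 0 1 ≠ 0 ∧ |(A : M2') 0 1| < 2 * |(A : M2') 1 1|) ∨
         ((A : M2') 1 0 ≠ 0 ∧ |(A : M2') 1 0| < 2 * |(A : M2') 1 1|)) :
    ∃ A' : SL2', IsConj A A' ∧ |(A' : M2') 1 1| < |(A : M2') 1 1| ∧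
      (A' : M2') 0 0 + (A' : M2') 1 1 = (A : M2') 0 0 + (A : M2') 1 1 := by
  rcases h with ⟨hne, hlt⟩ | ⟨hne, hlt⟩
  · rcases shrink ((A : M2') 1 1) ((A : M2') 0 1) hne hlt with hs | hs
    · obtain ⟨A', hc, h00, h11⟩ := conjL A 1
      refine ⟨A', hc, ?_, ?_⟩
      · rw [h11]; simpa using hs
      · rw [h00, h11]; ring
    · obtain ⟨A', hc, h00, h11⟩ := conjL A (-1)
      refine ⟨A', hc, ?_, ?_⟩
      · rw [h11]; simpa [sub_eq_add_neg] using hs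
      · rw [h00, h11]; ring
  · rcases shrink ((A : M2') 1 1) ((A : M2') 1 0) hne hlt with hs | hs
    · obtain ⟨A', hc, h00, h11⟩ := conjT A (-1)
      refine ⟨A', hc, ?_, ?_⟩
      · rw [h11]; simpa using hs
      · rw [h00, h11]; ring
    · obtain ⟨A', hc, h00, h11⟩ := conjT A 1
      refine ⟨A', hc, ?_, ?_⟩
      · rw [h11]; simpa using hs
      · rw [h00, h11]; ring

lemma easy_case (A : SL2')
    (h : |(A : M2') 0 0| ≤ |(A : M2') 0 0 + (A : M2') 1 1| ∨
         |(A : M2') 1 1| ≤ |(A : M2') 0 0 + (A : M2') 1 1|) :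
    ∃ A' : SL2', IsConj A A' ∧
      |(A' : M2') 0 0| ≤ |(A : M2') 0 0 + (A : M2') 1 1| := by
  rcases h with h | h
  · exact ⟨A, IsConj.refl A, h⟩
  · obtain ⟨A', hc, h00, _⟩ := conjS A
    exact ⟨A', hc, by rw [h00]; exact h⟩

lemma det_entries (A : SL2') :
    (A : M2') 0 0 * (A : M2') 1 1 - (A : M2') 0 1 * (A : M2') 1 0 = 1 := by
  have := A.2
  rwa [Matrix.det_fin_two] at this

lemma key_lemma : ∀ (N : ℕ) (A : SL2'),
    (min |(A : M2') 0 0| |(A : M2') 1 1|).toNat ≤ N →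
    ∃ A' : SL2', IsConj A A' ∧
      |(A' : M2') 0 0| ≤ |(A : M2') 0 0 + (A : M2') 1 1| := by
  intro N
  induction N with
  | zero =>
    intro A h
    apply easy_case
    have ha := abs_nonneg ((A : M2') 0 0)
    have hd := abs_nonneg ((A : M2') 1 1)
    have hs := abs_nonneg ((A : M2') 0 0 + (A : M2') 1 1)
    have hmin : min |(A : M2') 0 0| |(A : M2') 1 1| ≤ 0 := by omega
    rcases min_le_iff.mp hmin with h' | h'
    · left; omega
    · right; omega
  | succ n ih =>
    intro A h
    by_cases h1 : |(A : M2') 0 0| ≤ |(A : M2') 0 0 + (A : M2') 1 1|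
    · exact easy_case A (Or.inl h1)
    by_cases h2 : |(A : M2') 1 1| ≤ |(A : M2') 0 0 + (A : M2') 1 1|
    · exact easy_case A (Or.inr h2)
    push_neg at h1 h2
    have hdet := det_entries A
    rcases le_total |(A : M2') 0 0| |(A : M2') 1 1| with hord | hord
    · have he := exists_e ((A : M2') 0 0) ((A : M2') 1 1) ((A : M2') 0 1) ((A : M2') 1 0)
        hdet h1 h2 hord
      obtain ⟨A', hc, hlt, htr⟩ := shrink_a A he
      have hfuel : (min |(A' : M2') 0 0| |(A' : M2') 1 1|).toNat ≤ n := by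
        have hm1 : min |(A' : M2') 0 0| |(A' : M2') 1 1| ≤ |(A' : M2') 0 0| :=
          min_le_left _ _
        have hm2 : min |(A : M2') 0 0| |(A : M2') 1 1| = |(A : M2') 0 0| :=
          min_eq_left hord
        omega
      obtain ⟨A'', hc2, hb2⟩ := ih A' hfuel
      rw [htr] at hb2
      exact ⟨A'', hc.trans hc2, hb2⟩
    · have he := exists_e ((A : M2') 1 1) ((A : M2') 0 0) ((A : M2') 1 0) ((A : M2') 0 1)
        (by linarith [hdet]) (by rwa [add_comm]) (by rwa [add_comm]) hord
      obtain ⟨A', hc, hlt, htr⟩ := shrink_d A (by tauto)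
      have hfuel : (min |(A' : M2') 0 0| |(A' : M2') 1 1|).toNat ≤ n := by
        have hm1 : min |(A' : M2') 0 0| |(A' : M2') 1 1| ≤ |(A' : M2') 1 1| :=
          min_le_right _ _
        have hm2 : min |(A : M2') 0 0| |(A : M2') 1 1| = |(A : M2') 1 1| :=
          min_eq_right hord
        omega
      obtain ⟨A'', hc2, hb2⟩ := ih A' hfuel
      rw [htr] at hb2
      exact ⟨A'', hc.trans hc2, hb2⟩

/-- If `A = [[a,b],[c,d]] ∈ SL₂(ℤ)` has `b·c ≠ 0` and `|a + d| ≤ k` for some `k > 0`,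
then `A` is conjugate in `SL₂(ℤ)` to a matrix whose `(1,1)`-entry `a₁` satisfies
`|a₁| ≤ k`. -/
theorem conj_to_bounded_top_left_entry
    (A : Matrix.SpecialLinearGroup (Fin 2) ℤ) (k : ℝ) (hk : 0 < k)
    (hbc : (A : Matrix (Fin 2) (Fin 2) ℤ) 0 1 * (A : Matrix (Fin 2) (Fin 2) ℤ) 1 0 ≠ 0)
    (htr : |(((A : Matrix (Fin 2) (Fin 2) ℤ) 0 0 + (A : Matrix (Fin 2) (Fin 2) ℤ) 1 1 : ℤ) : ℝ)| ≤ k) :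
    ∃ A' : Matrix.SpecialLinearGroup (Fin 2) ℤ,
      IsConj A A' ∧ |(((A' : Matrix (Fin 2) (Fin 2) ℤ) 0 0 : ℤ) : ℝ)| ≤ k := by
  obtain ⟨A', hc, hb⟩ := key_lemma (min |(A : M2') 0 0| |(A : M2') 1 1|).toNat A le_rfl
  refine ⟨A', hc, ?_⟩
  calc |(((A' : M2') 0 0 : ℤ) : ℝ)|
      = ((|(A' : M2') 0 0| : ℤ) : ℝ) := by rw [Int.cast_abs]
    _ ≤ ((|(A : M2') 0 0 + (A : M2') 1 1| : ℤ) : ℝ) := by exact_mod_cast hb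
    _ = |(((A : M2') 0 0 + (A : M2') 1 1 : ℤ) : ℝ)| := by rw [Int.cast_abs]
    _ ≤ k := htr
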